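/- For any permutation w in S_n, the lowest-degree homogeneous component of the Grothendieck polynomial 𝔊_w is the Schubert polynomial 𝔖_w; that is, 𝔊_w = 𝔖_w + (terms of degree strictly greater than ℓ(w)). -/

import Mathlib

open MvPolynomial Classical

/-- The divided difference operator ∂ on ℤ[x_1,...,x_n] for the pair of variables
x_i, x_j (intended: j = i+1): ∂(f) = (f - s_{ij}·f)/(x_i - x_j), defined via choice
from the (always valid) divisibility of f - s_{ij}·f by x_i - x_j. -/
noncomputable def ddiff (n : ℕ) (i j : Fin n) (f : MvPolynomial (Fin n) ℤ) :
    MvPolynomial (Fin n) ℤ :=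
  if h : (X i - X j : MvPolynomial (Fin n) ℤ) ∣ (f - rename (Equiv.swap i j) f) then
    h.choose
  else 0

/-- The isobaric divided difference π_i(f) = ∂_i((1 - x_{i+1})f). -/
noncomputable def isobaric (n : ℕ) (i j : Fin n) (f : MvPolynomial (Fin n) ℤ) :
    MvPolynomial (Fin n) ℤ :=
  ddiff n i j ((1 - X j) * f)

/-- `IsSchubert n w f` holds iff f is the Schubert polynomial 𝔖_w:
𝔖_{w_0} = x_1^{n-1}x_2^{n-2}···x_{n-1} for the longest element w_0, and
𝔖_w = ∂_i(𝔖_{w s_i}) whenever w(i) < w(i+1). -/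
inductive IsSchubert (n : ℕ) : Equiv.Perm (Fin n) → MvPolynomial (Fin n) ℤ → Prop where
  | w0 : IsSchubert n (Fin.revPerm) (∏ i : Fin n, X i ^ (n - 1 - (i : ℕ)))
  | step (w : Equiv.Perm (Fin n)) (i j : Fin n) (hij : (i : ℕ) + 1 = (j : ℕ))
      (hasc : w i < w j) (f : MvPolynomial (Fin n) ℤ)
      (hf : IsSchubert n (w * Equiv.swap i j) f) :
      IsSchubert n w (ddiff n i j f)

/-- `IsGroth n w f` holds iff f is the Grothendieck polynomial 𝔊_w:
𝔊_{w_0} = x_1^{n-1}x_2^{n-2}···x_{n-1}, and 𝔊_w = π_i(𝔊_{w s_i}) whenever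
w(i) < w(i+1), where π_i(f) = ∂_i((1-x_{i+1})f). -/
inductive IsGroth (n : ℕ) : Equiv.Perm (Fin n) → MvPolynomial (Fin n) ℤ → Prop where
  | w0 : IsGroth n (Fin.revPerm) (∏ i : Fin n, X i ^ (n - 1 - (i : ℕ)))
  | step (w : Equiv.Perm (Fin n)) (i j : Fin n) (hij : (i : ℕ) + 1 = (j : ℕ))
      (hasc : w i < w j) (f : MvPolynomial (Fin n) ℤ)
      (hf : IsGroth n (w * Equiv.swap i j) f) :
      IsGroth n w (isobaric n i j f)

/-- The Coxeter length ℓ(w): the number of inversions of w. -/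
def permLength (n : ℕ) (w : Equiv.Perm (Fin n)) : ℕ :=
  (Finset.univ.filter fun p : Fin n × Fin n => p.1 < p.2 ∧ w p.2 < w p.1).card

/-!
𝔖_w and 𝔊_w are both obtained from the staircase monomial by applying, along ascents, the
operators ∂_i and π_i = ∂_i ∘ (1 - x_{i+1}) respectively. The operator ∂_i lowers degrees by
exactly one, commuting with homogeneous components up to that shift, and multiplication by
1 - x_{i+1} only adds terms of higher degree. Hence, along the chain defining 𝔊_w, its components
below degree ℓ(w) vanish and the one in degree ℓ(w) is obtained from the staircase monomial by
the same operators ∂_i, i.e. it is 𝔖_w. Since the chain used for 𝔖_w may be different, this needs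
𝔖_w to be independent of the chain; this follows by descending induction on ℓ(w), reconciling two
chains through a Schubert polynomial of a longer permutation and the commutation and braid
relations of the ∂_i.
-/

open Equiv

theorem swap_mul_swap_comm {α : Type*} [DecidableEq α] {i j k l : α}
    (hik : i ≠ k) (hil : i ≠ l) (hjk : j ≠ k) (hjl : j ≠ l) :
    swap i j * swap k l = swap k l * swap i j := by
  ext x
  simp only [Perm.mul_apply, swap_apply_def]
  split_ifs <;> simp_all

theorem swap_braid {α : Type*} [DecidableEq α] {i j k : α}
    (hij : i ≠ j) (hjk : j ≠ k) (hik : i ≠ k) :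
    swap i j * swap j k * swap i j = swap j k * swap i j * swap j k := by
  rw [swap_mul_swap_mul_swap hij hik, swap_comm i j, swap_comm j k,
    swap_mul_swap_mul_swap hjk.symm hik.symm, swap_comm]

theorem homogeneousComponent_mul_of_isHomogeneous {σ R : Type*} [CommSemiring R]
    {φ : MvPolynomial σ R} {i : ℕ} (hφ : φ.IsHomogeneous i) (p : MvPolynomial σ R) (d : ℕ) :
    homogeneousComponent (i + d) (φ * p) = φ * homogeneousComponent d p := by
  let _ := gradedAlgebra (σ := σ) (R := R)
  have h := DirectSum.coe_decompose_mul_of_left_mem_of_le (homogeneousSubmodule σ R) (b := p)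
    ((mem_homogeneousSubmodule _ _).2 hφ) (Nat.le_add_right i d)
  rw [Nat.add_sub_cancel_left] at h
  erw [decomposition.decompose'_apply, decomposition.decompose'_apply] at h
  exact h

section DividedDifference

variable {n : ℕ} {i j k l : Fin n} {f g : MvPolynomial (Fin n) ℤ}

theorem X_sub_X_dvd_sub_rename_swap (i j : Fin n) (f : MvPolynomial (Fin n) ℤ) :
    (X i - X j : MvPolynomial (Fin n) ℤ) ∣ f - rename (swap i j) f := by
  induction f using MvPolynomial.induction_on with
  | C a => simp
  | add p q hp hq => simpa [add_sub_add_comm] using dvd_add hp hq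
  | mul_X p k hp =>
    have hXk : (X i - X j : MvPolynomial (Fin n) ℤ) ∣ X k - X (swap i j k) := by
      rcases eq_or_ne k i with rfl | hki
      · simp
      rcases eq_or_ne k j with rfl | hkj
      · simpa using (dvd_neg.mpr dvd_rfl : (X i - X k : MvPolynomial (Fin n) ℤ) ∣ -(X i - X k))
      · simp [swap_apply_of_ne_of_ne hki hkj]
    rw [map_mul, rename_X, show p * X k - rename (swap i j) p * X (swap i j k) =
      (p - rename (swap i j) p) * X k + rename (swap i j) p * (X k - X (swap i j k)) by ring]
    exact dvd_add (hp.mul_right _) (hXk.mul_left _)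

theorem X_sub_X_mul_ddiff (i j : Fin n) (f : MvPolynomial (Fin n) ℤ) :
    (X i - X j) * ddiff n i j f = f - rename (swap i j) f := by
  rw [ddiff, dif_pos (X_sub_X_dvd_sub_rename_swap i j f)]
  exact (X_sub_X_dvd_sub_rename_swap i j f).choose_spec.symm

theorem X_sub_X_ne_zero (h : i ≠ j) : (X i - X j : MvPolynomial (Fin n) ℤ) ≠ 0 :=
  sub_ne_zero_of_ne fun hX => h (X_injective hX)

theorem ddiff_eq_of_X_sub_X_mul (h : i ≠ j)
    (hg : (X i - X j) * g = f - rename (swap i j) f) : ddiff n i j f = g :=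
  mul_left_cancel₀ (X_sub_X_ne_zero h) ((X_sub_X_mul_ddiff i j f).trans hg.symm)

theorem ddiff_sub (h : i ≠ j) (f g : MvPolynomial (Fin n) ℤ) :
    ddiff n i j (f - g) = ddiff n i j f - ddiff n i j g :=
  ddiff_eq_of_X_sub_X_mul h <| by
    rw [map_sub]; linear_combination X_sub_X_mul_ddiff i j f - X_sub_X_mul_ddiff i j g

theorem ddiff_zero (h : i ≠ j) : ddiff n i j 0 = 0 := by
  simpa using ddiff_sub h 0 0

theorem ddiff_neg (h : i ≠ j) (f : MvPolynomial (Fin n) ℤ) :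
    ddiff n i j (-f) = -ddiff n i j f :=
  ddiff_eq_of_X_sub_X_mul h <| by rw [map_neg]; linear_combination -X_sub_X_mul_ddiff i j f

theorem ddiff_swap_indices (h : i ≠ j) (f : MvPolynomial (Fin n) ℤ) :
    ddiff n j i f = -ddiff n i j f :=
  ddiff_eq_of_X_sub_X_mul h.symm <| by
    rw [swap_comm]; linear_combination X_sub_X_mul_ddiff i j f

theorem rename_swap_rename_swap (i j : Fin n) (f : MvPolynomial (Fin n) ℤ) :
    rename (swap i j) (rename (swap i j) f) = f := by
  rw [rename_rename, ← Perm.coe_mul, swap_mul_self, Perm.coe_one, rename_id_apply]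

theorem rename_swap_comm (hik : i ≠ k) (hil : i ≠ l) (hjk : j ≠ k) (hjl : j ≠ l)
    (f : MvPolynomial (Fin n) ℤ) :
    rename (swap i j) (rename (swap k l) f) = rename (swap k l) (rename (swap i j) f) := by
  simp only [rename_rename, ← Perm.coe_mul, swap_mul_swap_comm hik hil hjk hjl]

theorem ddiff_comm (hij : i ≠ j) (hkl : k ≠ l)
    (hik : i ≠ k) (hil : i ≠ l) (hjk : j ≠ k) (hjl : j ≠ l) (f : MvPolynomial (Fin n) ℤ) :
    ddiff n i j (ddiff n k l f) = ddiff n k l (ddiff n i j f) := by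
  have hkl_f := X_sub_X_mul_ddiff k l f
  have hij_f := X_sub_X_mul_ddiff i j f
  have hij_kl := X_sub_X_mul_ddiff i j (ddiff n k l f)
  have h₁ := congrArg (rename (swap i j)) hkl_f
  have h₂ := congrArg (rename (swap k l)) hij_f
  simp only [map_mul, map_sub, rename_X, swap_apply_of_ne_of_ne hik.symm hjk.symm,
    swap_apply_of_ne_of_ne hil.symm hjl.symm, swap_apply_of_ne_of_ne hik hil,
    swap_apply_of_ne_of_ne hjk hjl] at h₁ h₂
  refine (ddiff_eq_of_X_sub_X_mul hkl (mul_left_cancel₀ (X_sub_X_ne_zero hij) ?_)).symm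
  linear_combination (X k - X l) * hij_kl + hkl_f - h₁ - hij_f + h₂ +
    rename_swap_comm hik hil hjk hjl f

theorem vandermonde_mul_ddiff_ddiff_ddiff (hij : i ≠ j) (hjk : j ≠ k) (hik : i ≠ k)
    (f : MvPolynomial (Fin n) ℤ) :
    (X i - X j) * ((X i - X k) * ((X j - X k) * ddiff n i j (ddiff n j k (ddiff n i j f))))
      = f - rename (swap i j) f - rename (swap j k) f
        + rename (swap i j) (rename (swap j k) f) + rename (swap j k) (rename (swap i j) f)
        - rename (swap i j) (rename (swap j k) (rename (swap i j) f)) := by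
  set d₁ := ddiff n i j f
  set d₂ := ddiff n j k d₁
  have h₁ := X_sub_X_mul_ddiff i j f
  have h₂ := X_sub_X_mul_ddiff j k d₁
  have h₃ := X_sub_X_mul_ddiff i j d₂
  have hak : swap i j k = k := swap_apply_of_ne_of_ne hik.symm hjk.symm
  have hbi : swap j k i = i := swap_apply_of_ne_of_ne hij hik
  have h₁a := congrArg (rename (swap i j)) h₁
  simp only [map_mul, map_sub, rename_X, swap_apply_left, swap_apply_right,
    rename_swap_rename_swap] at h₁a
  have hd₁ : rename (swap i j) d₁ = d₁ :=
    mul_left_cancel₀ (X_sub_X_ne_zero hij) (by linear_combination -h₁a - h₁)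
  have h₂a := congrArg (rename (swap i j)) h₂
  simp only [map_mul, map_sub, rename_X, swap_apply_right, hak, hd₁] at h₂a
  have h₁b := congrArg (rename (swap j k)) h₁
  simp only [map_mul, map_sub, rename_X, hbi, swap_apply_left] at h₁b
  have h₁ba := congrArg (rename (swap i j)) h₁b
  simp only [map_mul, map_sub, rename_X, swap_apply_left, hak] at h₁ba
  linear_combination (X i - X k) * (X j - X k) * h₃ + (X i - X k) * h₂
    - (X j - X k) * h₂a + h₁ - h₁b + h₁ba

theorem ddiff_braid (hij : i ≠ j) (hjk : j ≠ k) (hik : i ≠ k) (f : MvPolynomial (Fin n) ℤ) :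
    ddiff n i j (ddiff n j k (ddiff n i j f)) = ddiff n j k (ddiff n i j (ddiff n j k f)) := by
  -- Times the Vandermonde factor, both sides are the antisymmetrization of `f` over the
  -- permutations of `{i, j, k}`; `h'` is the first identity for the reversed triple `(k, j, i)`.
  have h := vandermonde_mul_ddiff_ddiff_ddiff hij hjk hik f
  have h' := vandermonde_mul_ddiff_ddiff_ddiff hjk.symm hij.symm hik.symm f
  simp only [swap_comm k j, swap_comm j i, ddiff_swap_indices hjk, ddiff_swap_indices hij,
    ddiff_neg hij, ddiff_neg hjk] at h'
  have hperm : rename (swap i j) (rename (swap j k) (rename (swap i j) f))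
      = rename (swap j k) (rename (swap i j) (rename (swap j k) f)) := by
    simp only [rename_rename, ← Perm.coe_mul, ← mul_assoc, swap_braid hij hjk hik]
  refine mul_left_cancel₀ (mul_ne_zero (X_sub_X_ne_zero hij)
    (mul_ne_zero (X_sub_X_ne_zero hik) (X_sub_X_ne_zero hjk))) ?_
  linear_combination h - h' - hperm

theorem homogeneousComponent_ddiff (h : i ≠ j) (f : MvPolynomial (Fin n) ℤ) (d : ℕ) :
    homogeneousComponent d (ddiff n i j f) = ddiff n i j (homogeneousComponent (d + 1) f) := by
  refine (ddiff_eq_of_X_sub_X_mul h ?_).symm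
  rw [← homogeneousComponent_mul_of_isHomogeneous ((isHomogeneous_X ℤ i).sub (isHomogeneous_X ℤ j)),
    add_comm 1 d, X_sub_X_mul_ddiff, map_sub, rename_homogeneousComponent]

theorem homogeneousComponent_one_sub_X_mul (j : Fin n) (f : MvPolynomial (Fin n) ℤ) (d : ℕ) :
    homogeneousComponent (d + 1) ((1 - X j) * f)
      = homogeneousComponent (d + 1) f - X j * homogeneousComponent d f := by
  rw [sub_mul, one_mul, map_sub, add_comm d 1,
    homogeneousComponent_mul_of_isHomogeneous (isHomogeneous_X ℤ j)]

end DividedDifference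

section Length

variable {n : ℕ} {w : Perm (Fin n)} {i j : Fin n}

theorem ne_of_adjacent (hij : (i : ℕ) + 1 = j) : i ≠ j :=
  fun h => by simp [h] at hij

theorem permLength_mul_swap_of_lt (hij : (i : ℕ) + 1 = j) (hasc : w i < w j) :
    permLength n (w * swap i j) = permLength n w + 1 := by
  have hlt : i < j := Fin.lt_def.2 (by omega)
  -- As `i` and `j` are adjacent, `swap i j` preserves the order of every pair other than `{i, j}`.
  have hinsert : (Finset.univ.filter fun q : Fin n × Fin n =>
      swap i j q.1 < swap i j q.2 ∧ w q.2 < w q.1) =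
      insert (j, i) (Finset.univ.filter fun p : Fin n × Fin n => p.1 < p.2 ∧ w p.2 < w p.1) := by
    ext ⟨a, b⟩
    rw [Finset.mem_filter, Finset.mem_insert, Finset.mem_filter]
    simp only [Finset.mem_univ, true_and, Prod.mk.injEq, swap_apply_def]
    split_ifs <;> subst_vars <;>
      simp only [Fin.lt_def, Fin.ext_iff, true_and, and_true, true_or, iff_true] at * <;> omega
  have hreindex : permLength n (w * swap i j) = (Finset.univ.filter fun q : Fin n × Fin n =>
      swap i j q.1 < swap i j q.2 ∧ w q.2 < w q.1).card :=
    Finset.card_equiv ((swap i j).prodCongr (swap i j)) fun _ => by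
      rw [Finset.mem_filter, Finset.mem_filter]
      simp [swap_apply_self]
  rw [hreindex, hinsert, Finset.card_insert_of_notMem (by simp [hlt.le])]
  rfl

theorem permLength_le_sum (w : Perm (Fin n)) :
    permLength n w ≤ ∑ i : Fin n, (n - 1 - (i : ℕ)) := by
  calc permLength n w
      ≤ (Finset.univ.filter fun p : Fin n × Fin n => p.1 < p.2).card :=
        Finset.card_le_card fun p hp => by
          rw [Finset.mem_filter] at hp ⊢
          exact ⟨hp.1, hp.2.1⟩
    _ = ∑ i : Fin n, (Finset.Ioi i).card := by
        rw [Finset.card_filter, Fintype.sum_prod_type]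
        refine Finset.sum_congr rfl fun i _ => ?_
        rw [Finset.sum_boole, Nat.cast_id, Finset.filter_lt_eq_Ioi]
    _ = ∑ i : Fin n, (n - 1 - (i : ℕ)) := by simp [Fin.card_Ioi]

theorem not_revPerm_lt_of_adjacent (hij : (i : ℕ) + 1 = j) : ¬Fin.revPerm i < Fin.revPerm j := by
  simp only [Fin.revPerm_apply, Fin.rev_lt_rev, not_lt, Fin.le_def]
  omega

theorem eq_revPerm_of_forall_not_lt (h : ∀ i j : Fin n, (i : ℕ) + 1 = j → ¬w i < w j) :
    w = Fin.revPerm := by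
  obtain _ | m := n
  · exact Subsingleton.elim _ _
  have hmono : StrictMono (w ∘ Fin.rev) := Fin.strictMono_iff_lt_succ.2 fun k =>
    lt_of_le_of_ne (not_lt.1 (h _ _ (by simp; omega)))
      (w.injective.ne (Fin.rev_injective.ne Fin.castSucc_lt_succ.ne))
  refine Equiv.ext fun x => ?_
  simpa using congrFun hmono.eq_id (Fin.rev x)

theorem permLength_induction_desc {P : Perm (Fin n) → Prop}
    (step : ∀ w, (∀ v, permLength n w < permLength n v → P v) → P w) (w : Perm (Fin n)) :
    P w := by
  induction h : ∑ i : Fin n, (n - 1 - (i : ℕ)) - permLength n w using Nat.strong_induction_on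
    generalizing w with
  | _ k ih =>
    refine step w fun v hv => ih _ ?_ v rfl
    have := permLength_le_sum v
    omega

end Length

section Schubert

variable {n : ℕ} {w : Perm (Fin n)} {i j k l : Fin n} {f f' : MvPolynomial (Fin n) ℤ}

theorem IsGroth.homogeneousComponent_eq_zero {G : MvPolynomial (Fin n) ℤ}
    (hG : IsGroth n w G) {d : ℕ} (hd : d < permLength n w) : homogeneousComponent d G = 0 := by
  induction hG generalizing d with
  | w0 =>
    have hM : (∏ i : Fin n, (X i : MvPolynomial (Fin n) ℤ) ^ (n - 1 - (i : ℕ))).IsHomogeneous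
        (∑ i : Fin n, (n - 1 - (i : ℕ))) :=
      IsHomogeneous.prod _ _ _ fun i _ => isHomogeneous_X_pow i _
    have := permLength_le_sum (Fin.revPerm : Perm (Fin n))
    rw [homogeneousComponent_of_mem ((mem_homogeneousSubmodule _ _).2 hM), if_neg (by omega)]
  | step w i j hij hasc f hf ih =>
    have := permLength_mul_swap_of_lt hij hasc
    rw [isobaric, homogeneousComponent_ddiff (ne_of_adjacent hij),
      homogeneousComponent_one_sub_X_mul, ih (by omega), ih (by omega), mul_zero, sub_zero,
      ddiff_zero (ne_of_adjacent hij)]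

theorem exists_isSchubert (w : Perm (Fin n)) : ∃ S, IsSchubert n w S := by
  induction w using permLength_induction_desc with
  | step w ih =>
    by_cases hasc : ∃ i j : Fin n, (i : ℕ) + 1 = j ∧ w i < w j
    · obtain ⟨i, j, hij, hlt⟩ := hasc
      obtain ⟨S, hS⟩ := ih _ (by rw [permLength_mul_swap_of_lt hij hlt]; omega)
      exact ⟨_, .step w i j hij hlt S hS⟩
    · rw [eq_revPerm_of_forall_not_lt fun i j hij hlt => hasc ⟨i, j, hij, hlt⟩]
      exact ⟨_, .w0⟩

theorem ddiff_eq_ddiff_of_commuting_ascents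
    (hunique : ∀ v, permLength n w < permLength n v →
      ∀ S S', IsSchubert n v S → IsSchubert n v S' → S = S')
    (hij : (i : ℕ) + 1 = j) (hkl : (k : ℕ) + 1 = l) (hfar : (j : ℕ) < k)
    (hasc : w i < w j) (hasc' : w k < w l)
    (hf : IsSchubert n (w * swap i j) f) (hf' : IsSchubert n (w * swap k l) f') :
    ddiff n i j f = ddiff n k l f' := by
  have hik : i ≠ k := Fin.ne_of_val_ne (by omega)
  have hil : i ≠ l := Fin.ne_of_val_ne (by omega)
  have hjk : j ≠ k := Fin.ne_of_val_ne (by omega)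
  have hjl : j ≠ l := Fin.ne_of_val_ne (by omega)
  obtain ⟨g, hg⟩ := exists_isSchubert (w * swap i j * swap k l)
  have hg' : IsSchubert n (w * swap k l * swap i j) g := by
    rwa [mul_assoc, ← swap_mul_swap_comm hik hil hjk hjl, ← mul_assoc]
  have hf_eq : f = ddiff n k l g := hunique _ (by rw [permLength_mul_swap_of_lt hij hasc]; omega)
    _ _ hf (.step _ k l hkl (by
      rwa [Perm.mul_apply, Perm.mul_apply, swap_apply_of_ne_of_ne hik.symm hjk.symm,
        swap_apply_of_ne_of_ne hil.symm hjl.symm]) g hg)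
  have hf'_eq : f' = ddiff n i j g := hunique _ (by rw [permLength_mul_swap_of_lt hkl hasc']; omega)
    _ _ hf' (.step _ i j hij (by
      rwa [Perm.mul_apply, Perm.mul_apply, swap_apply_of_ne_of_ne hik hil,
        swap_apply_of_ne_of_ne hjk hjl]) g hg')
  rw [hf_eq, hf'_eq, ddiff_comm (ne_of_adjacent hij) (ne_of_adjacent hkl) hik hil hjk hjl]

theorem ddiff_eq_ddiff_of_braid_ascents
    (hunique : ∀ v, permLength n w < permLength n v →
      ∀ S S', IsSchubert n v S → IsSchubert n v S' → S = S')
    (hij : (i : ℕ) + 1 = j) (hjk : (j : ℕ) + 1 = k) (hasc : w i < w j) (hasc' : w j < w k)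
    (hf : IsSchubert n (w * swap i j) f) (hf' : IsSchubert n (w * swap j k) f') :
    ddiff n i j f = ddiff n j k f' := by
  have hij' := ne_of_adjacent hij
  have hjk' := ne_of_adjacent hjk
  have hik : i ≠ k := Fin.ne_of_val_ne (by omega)
  have hki : swap j k i = i := swap_apply_of_ne_of_ne hij' hik
  have hik' : swap i j k = k := swap_apply_of_ne_of_ne hik.symm hjk'.symm
  obtain ⟨g, hg⟩ := exists_isSchubert (w * swap i j * swap j k * swap i j)
  have hg' : IsSchubert n (w * swap j k * swap i j * swap j k) g := by
    rwa [mul_assoc, mul_assoc, ← mul_assoc (swap i j), swap_braid hij' hjk' hik, ← mul_assoc,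
      ← mul_assoc] at hg
  have hf_eq : f = ddiff n j k (ddiff n i j g) := by
    refine hunique _ (by rw [permLength_mul_swap_of_lt hij hasc]; omega) _ _ hf
      (.step _ j k hjk (by simpa [hik'] using hasc.trans hasc') _
        (.step _ i j hij (by simpa [hki, hik'] using hasc') g hg))
  have hf'_eq : f' = ddiff n i j (ddiff n j k g) := by
    refine hunique _ (by rw [permLength_mul_swap_of_lt hjk hasc']; omega) _ _ hf'
      (.step _ i j hij (by simpa [hki] using hasc.trans hasc') _
        (.step _ j k hjk (by simpa [hki, hik'] using hasc) g hg'))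
  rw [hf_eq, hf'_eq, ddiff_braid hij' hjk' hik]

theorem ddiff_eq_ddiff_of_ascents
    (hunique : ∀ v, permLength n w < permLength n v →
      ∀ S S', IsSchubert n v S → IsSchubert n v S' → S = S')
    (hij : (i : ℕ) + 1 = j) (hkl : (k : ℕ) + 1 = l) (hasc : w i < w j) (hasc' : w k < w l)
    (hf : IsSchubert n (w * swap i j) f) (hf' : IsSchubert n (w * swap k l) f') :
    ddiff n i j f = ddiff n k l f' := by
  wlog hik : (i : ℕ) ≤ k generalizing i j k l f f'
  · exact (this hkl hij hasc' hasc hf' hf (by omega)).symm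
  obtain rfl | rfl | hfar : i = k ∨ j = k ∨ (j : ℕ) < k := by
    rw [Fin.ext_iff, Fin.ext_iff]
    omega
  · obtain rfl : j = l := Fin.ext (by omega)
    rw [hunique _ (by rw [permLength_mul_swap_of_lt hij hasc]; omega) _ _ hf hf']
  · exact ddiff_eq_ddiff_of_braid_ascents hunique hij hkl hasc hasc' hf hf'
  · exact ddiff_eq_ddiff_of_commuting_ascents hunique hij hkl hfar hasc hasc' hf hf'

theorem IsSchubert.unique {S S' : MvPolynomial (Fin n) ℤ} (hS : IsSchubert n w S)
    (hS' : IsSchubert n w S') : S = S' := by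
  induction w using permLength_induction_desc generalizing S S' with
  | step w ih =>
    cases hS with
    | w0 =>
      cases hS' with
      | w0 => rfl
      | step _ i j hij hasc => exact absurd hasc (not_revPerm_lt_of_adjacent hij)
    | step _ i j hij hasc f hf =>
      cases hS' with
      | w0 => exact absurd hasc (not_revPerm_lt_of_adjacent hij)
      | step _ k l hkl hasc' f' hf' =>
        exact ddiff_eq_ddiff_of_ascents (fun v hv _ _ => ih v hv) hij hkl hasc hasc' hf hf'

end Schubert

/-- 𝔊_w = 𝔖_w + (terms of degree strictly greater than ℓ(w)); i.e.,
the homogeneous components of 𝔊_w − 𝔖_w vanish in all degrees ≤ ℓ(w), so the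
lowest-degree homogeneous component of 𝔊_w is 𝔖_w. -/
theorem groth_lowest_component_schubert (n : ℕ) (w : Equiv.Perm (Fin n))
    (S G : MvPolynomial (Fin n) ℤ)
    (hS : IsSchubert n w S) (hG : IsGroth n w G) :
    ∀ d : ℕ, d ≤ permLength n w →
      MvPolynomial.homogeneousComponent d (G - S) = 0 := by
  induction hG generalizing S with
  | w0 => simp [hS.unique .w0]
  | step w i j hij hasc f hf ih =>
    intro d hd
    have hlen := permLength_mul_swap_of_lt hij hasc
    obtain ⟨fS, hfS⟩ := exists_isSchubert (w * swap i j)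
    rw [hS.unique (.step w i j hij hasc fS hfS), isobaric, ← ddiff_sub (ne_of_adjacent hij),
      homogeneousComponent_ddiff (ne_of_adjacent hij), map_sub, homogeneousComponent_one_sub_X_mul,
      hf.homogeneousComponent_eq_zero (d := d) (by omega), mul_zero, sub_zero, ← map_sub,
      ih fS hfS (d + 1) (by omega), ddiff_zero (ne_of_adjacent hij)]
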